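/- arXiv:2011.04276 — 4 statements merged into one kernel-verified Lean document; each statement's English description precedes it below -/
import Mathlib

section
/- Let E be a real Banach space, a ∈ ℝ, α, β ∈ (0,1], and f : ℝ → E. Then f has a conformable derivative of order α with lower terminal a at every point of (a,∞) if and only if f has a conformable derivative of order β with lower terminal a at every point of (a,∞). In other words, the classes C^α_a((a,∞),E) and C^β_a((a,∞),E) coincide. -/
open Filter Topology Set

lemma key {E : Type*} [NormedAddCommGroup E] [NormedSpace ℝ E]
    (t c : ℝ) (hc : c ≠ 0) (f : ℝ → E) (T : E) :
    Tendsto (fun θ : ℝ => θ⁻¹ • (f (t + θ * c) - f t)) (𝓝[≠] 0) (𝓝 T) ↔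
    HasDerivAt f (c⁻¹ • T) t := by
  rw [hasDerivAt_iff_tendsto_slope]
  set e : ℝ ≃ₜ ℝ := (Homeomorph.mulLeft₀ c hc).trans (Homeomorph.addLeft t) with he
  have he0 : e 0 = t := by simp [he, Homeomorph.mulLeft₀, Equiv.mulLeft₀]
  have hmap : map e (𝓝[≠] (0:ℝ)) = 𝓝[≠] t := by
    rw [e.map_punctured_nhds_eq 0, he0]
  rw [← hmap, tendsto_map'_iff]
  have hfun : (slope f t ∘ e) = fun θ : ℝ => c⁻¹ • (θ⁻¹ • (f (t + θ * c) - f t)) := by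
    funext θ
    simp only [Function.comp, he, Homeomorph.trans_apply, Homeomorph.coe_mulLeft₀,
      Homeomorph.coe_addLeft, slope_def_module]
    rw [mul_comm c θ, add_sub_cancel_left, mul_inv, mul_smul, smul_comm]
  rw [hfun]
  constructor
  · intro h; exact h.const_smul c⁻¹
  · intro h
    have := h.const_smul c
    simpa [smul_smul, mul_inv_cancel₀ hc, ← mul_assoc] using this

open Filter Topology Set

/-- The (two-sided) left conformable derivative of order `α` with lower terminal `a`:
`T^α_a f t = lim_{θ→0} (f (t + θ (t-a)^(1-α)) - f t) / θ`. -/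
def HasConfDerivAt {E : Type*} [NormedAddCommGroup E] [NormedSpace ℝ E]
    (a α : ℝ) (f : ℝ → E) (T : E) (t : ℝ) : Prop :=
  Tendsto (fun θ : ℝ => θ⁻¹ • (f (t + θ * (t - a) ^ (1 - α)) - f t)) (𝓝[≠] 0) (𝓝 T)

lemma conf_iff_diff {E : Type*} [NormedAddCommGroup E] [NormedSpace ℝ E]
    (a γ : ℝ) (f : ℝ → E) (t : ℝ) (ht : t ∈ Set.Ioi a) :
    (∃ T : E, HasConfDerivAt a γ f T t) ↔ DifferentiableAt ℝ f t := by
  have hc : ((t - a) ^ (1 - γ) : ℝ) ≠ 0 :=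
    (Real.rpow_pos_of_pos (sub_pos.mpr ht) _).ne'
  constructor
  · rintro ⟨T, hT⟩
    exact ((key t _ hc f T).mp hT).differentiableAt
  · intro hd
    refine ⟨(t - a) ^ (1 - γ) • deriv f t, ?_⟩
    rw [HasConfDerivAt, key t _ hc f]
    convert hd.hasDerivAt using 1
    rw [smul_smul, inv_mul_cancel₀ hc, one_smul]

theorem stmt4 {E : Type*} [NormedAddCommGroup E] [NormedSpace ℝ E] [CompleteSpace E]
    (a α β : ℝ) (hα : α ∈ Set.Ioc (0:ℝ) 1) (hβ : β ∈ Set.Ioc (0:ℝ) 1) (f : ℝ → E) :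
    (∀ t ∈ Set.Ioi a, ∃ T : E, HasConfDerivAt a α f T t) ↔
    (∀ t ∈ Set.Ioi a, ∃ T : E, HasConfDerivAt a β f T t) := by
  constructor <;> intro h t ht <;>
    [exact (conf_iff_diff a β f t ht).mpr ((conf_iff_diff a α f t ht).mp (h t ht));
     exact (conf_iff_diff a α f t ht).mpr ((conf_iff_diff a β f t ht).mp (h t ht))]
end

section
/- Let E be a real Banach space, a ∈ ℝ, α ∈ (0,1], and f : ℝ → E continuous on (a,∞) and locally integrable against the weight (s-a)^{α-1} near a (so that g(t) = ∫_a^t (s-a)^{α-1} • f(s) ds is well defined for t > a). Then for every t > a the conformable derivative of g of order α with lower terminal a exists and T^α_a g(t) = f(t). -/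
open Filter Topology Set

theorem stmt7 {E : Type*} [NormedAddCommGroup E] [NormedSpace ℝ E] [CompleteSpace E]
    (a α : ℝ) (hα : α ∈ Set.Ioc (0:ℝ) 1) (f : ℝ → E)
    (hf : ContinuousOn f (Set.Ioi a))
    (hint : ∀ t ∈ Set.Ioi a,
      IntervalIntegrable (fun s => (s - a) ^ (α - 1) • f s) MeasureTheory.volume a t) :
    ∀ t ∈ Set.Ioi a,
      HasConfDerivAt a α (fun u => ∫ s in a..u, (s - a) ^ (α - 1) • f s) (f t) t := by
  intro t ht
  have hta : 0 < t - a := sub_pos.mpr ht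
  set c : ℝ := (t - a) ^ (1 - α) with hc
  have hcpos : 0 < c := Real.rpow_pos_of_pos hta _
  set g : ℝ → E := fun u => ∫ s in a..u, (s - a) ^ (α - 1) • f s with hg
  have hcont : ContinuousAt (fun s => (s - a) ^ (α - 1) • f s) t := by
    have h1 : ContinuousAt (fun s : ℝ => (s - a) ^ (α - 1)) t :=
      ContinuousAt.rpow_const (continuous_sub_right a).continuousAt (Or.inl hta.ne')
    exact h1.smul (hf.continuousAt (Ioi_mem_nhds ht))
  have hmeas : StronglyMeasurableAtFilter (fun s => (s - a) ^ (α - 1) • f s)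
      (𝓝 t) MeasureTheory.volume := by
    have hco : ContinuousOn (fun s => (s - a) ^ (α - 1) • f s) (Ioi a) := by
      refine ContinuousOn.smul (fun s hs => ?_) hf
      exact (ContinuousAt.rpow_const (continuous_sub_right a).continuousAt
        (Or.inl (sub_pos.mpr hs).ne')).continuousWithinAt
    exact ⟨Ioi a, Ioi_mem_nhds ht, hco.aestronglyMeasurable measurableSet_Ioi⟩
  have hderiv : HasDerivAt g ((t - a) ^ (α - 1) • f t) t :=
    intervalIntegral.integral_hasDerivAt_right (hint t ht) hmeas hcont
  have hslope := hasDerivAt_iff_tendsto_slope.mp hderiv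
  have hmap : Tendsto (fun θ : ℝ => t + θ * c) (𝓝[≠] 0) (𝓝[≠] t) := by
    apply tendsto_nhdsWithin_of_tendsto_nhds_of_eventually_within
    · have h0 : Tendsto (fun θ : ℝ => t + θ * c) (𝓝 0) (𝓝 (t + 0 * c)) :=
        tendsto_const_nhds.add (tendsto_id.mul tendsto_const_nhds)
      simpa using h0.mono_left nhdsWithin_le_nhds
    · filter_upwards [self_mem_nhdsWithin] with θ hθ
      simp only [mem_compl_iff, mem_singleton_iff] at hθ ⊢
      intro h
      apply hθ
      have hθc : θ * c = 0 := by linarith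
      rcases mul_eq_zero.mp hθc with h' | h'
      · exact h'
      · exact absurd h' hcpos.ne'
  have h2 : Tendsto (fun θ : ℝ => slope g t (t + θ * c)) (𝓝[≠] 0)
      (𝓝 ((t - a) ^ (α - 1) • f t)) := hslope.comp hmap
  have h3 := h2.const_smul c
  have hkey : c • (t - a) ^ (α - 1) • f t = f t := by
    rw [smul_smul, hc, ← Real.rpow_add hta]
    norm_num
  rw [hkey] at h3
  refine h3.congr' ?_
  filter_upwards [self_mem_nhdsWithin] with θ hθ
  simp only [mem_compl_iff, mem_singleton_iff] at hθ
  have : (t + θ * c) - t = θ * c := by ring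
  rw [slope_def_module]
  simp only [this]
  rw [smul_smul, ← hc]
  congr 1
  field_simp
end

section
/- Let E be a real Banach space, a ∈ ℝ, α ∈ (0,1], and f : ℝ → E. Suppose there is ε > 0 such that f has a conformable derivative T^α_a f(t) of order α with lower terminal a at every t ∈ (a, a+ε), and that the limit L := lim_{t→a+} T^α_a f(t) exists. Then for every β ∈ (0,α), the limit lim_{t→a+} T^β_a f(t) exists and equals 0. -/
open Filter Topology Set

theorem stmt8 {E : Type*} [NormedAddCommGroup E] [NormedSpace ℝ E] [CompleteSpace E]
    (a α : ℝ) (hα : α ∈ Set.Ioc (0:ℝ) 1) (f : ℝ → E) (ε : ℝ) (hε : 0 < ε)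
    (F : ℝ → E) (hF : ∀ t ∈ Set.Ioo a (a + ε), HasConfDerivAt a α f (F t) t)
    (L : E) (hL : Tendsto F (𝓝[>] a) (𝓝 L)) :
    ∀ β ∈ Set.Ioo (0:ℝ) α, ∃ G : ℝ → E,
      (∀ t ∈ Set.Ioo a (a + ε), HasConfDerivAt a β f (G t) t) ∧
      Tendsto G (𝓝[>] a) (𝓝 (0 : E)) := by
  intro β hβ
  refine ⟨fun t => (t - a) ^ (α - β) • F t, ?_, ?_⟩
  · intro t ht
    have ht' : 0 < t - a := sub_pos.mpr ht.1
    set c : ℝ := (t - a) ^ (α - β) with hc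
    have hcpos : 0 < c := Real.rpow_pos_of_pos ht' _
    have hcne : c ≠ 0 := ne_of_gt hcpos
    -- key rpow identity
    have hkey : ∀ θ : ℝ, (c * θ) * (t - a) ^ (1 - α) = θ * (t - a) ^ (1 - β) := by
      intro θ
      have : c * (t - a) ^ (1 - α) = (t - a) ^ (1 - β) := by
        rw [hc, ← Real.rpow_add ht']
        ring_nf
      rw [mul_comm c θ, mul_assoc, this]
    have hmap : Tendsto (fun θ : ℝ => c * θ) (𝓝[≠] 0) (𝓝[≠] 0) := by
      rw [tendsto_nhdsWithin_iff]
      constructor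
      · have hcont : Continuous (fun θ : ℝ => c * θ) := continuous_const.mul continuous_id
        have := hcont.tendsto (0 : ℝ)
        simpa using this.mono_left nhdsWithin_le_nhds
      · filter_upwards [self_mem_nhdsWithin] with θ hθ
        exact mul_ne_zero hcne hθ
    have h1 := (hF t ht).comp hmap
    have h2 := h1.const_smul c
    have heq : (fun θ : ℝ => c • ((fun θ : ℝ =>
        θ⁻¹ • (f (t + θ * (t - a) ^ (1 - α)) - f t)) (c * θ))) =
        fun θ : ℝ => θ⁻¹ • (f (t + θ * (t - a) ^ (1 - β)) - f t) := by
      funext θ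
      simp only [hkey θ, smul_smul, mul_inv, ← mul_assoc, mul_inv_cancel₀ hcne, one_mul]
    unfold HasConfDerivAt
    rw [← heq]
    exact h2
  · have h1 : Tendsto (fun t : ℝ => (t - a) ^ (α - β)) (𝓝[>] a) (𝓝 0) := by
      have hsub : Tendsto (fun t : ℝ => t - a) (𝓝[>] a) (𝓝 0) := by
        have := ((continuous_sub_right a).tendsto a).mono_left
          (nhdsWithin_le_nhds (s := Set.Ioi a))
        simpa using this
      have hrpow : ContinuousAt (fun x : ℝ => x ^ (α - β)) 0 :=
        Real.continuousAt_rpow_const 0 (α - β) (Or.inr (sub_pos.mpr hβ.2).le)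
      have := hrpow.tendsto.comp hsub
      simpa [Function.comp_def, Real.zero_rpow (ne_of_gt (sub_pos.mpr hβ.2))] using this
    have := h1.smul hL
    simpa using this
end

section
/- Let a ∈ ℝ and α ∈ (0,1). Define f : ℝ → ℝ by f(t) = (t-a)^α for t > a. Then for every t > a the conformable derivative of order α with lower terminal a satisfies T^α_a f(t) = α, and consequently lim_{t→a+} T^α_a f(t) = α, even though f can be modified at the single point a (e.g. f(a) = 2) without changing any of these derivatives, so the existence of T^α_a f(a) := lim_{t→a+} T^α_a f(t) does not imply continuity of f at a. -/
open Filter Topology Set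

theorem stmt12 (a α : ℝ) (hα : α ∈ Set.Ioo (0:ℝ) 1) (f : ℝ → ℝ)
    (hf : ∀ t ∈ Set.Ioi a, f t = (t - a) ^ α) (hfa : f a = 2) :
    (∀ t ∈ Set.Ioi a, HasConfDerivAt a α f α t) ∧
    Tendsto (fun t : ℝ => α) (𝓝[>] a) (𝓝 α) ∧
    ¬ ContinuousAt f a := by
  obtain ⟨hα0, hα1⟩ := hα
  refine ⟨?_, tendsto_const_nhds, ?_⟩
  · intro t ht
    have hta : (0:ℝ) < t - a := sub_pos.2 ht
    set c : ℝ := (t - a) ^ (1 - α) with hc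
    have hcpos : 0 < c := Real.rpow_pos_of_pos hta _
    set g : ℝ → ℝ := fun s => (s - a) ^ α with hg
    have hderiv : HasDerivAt g (α * (t - a) ^ (α - 1)) t := by
      have h1 : HasDerivAt (fun s : ℝ => s - a) 1 t := (hasDerivAt_id t).sub_const a
      have h2 := (Real.hasDerivAt_rpow_const (p := α) (Or.inl hta.ne')).comp t h1
      simpa [mul_comm, Function.comp_def, hg] using h2
    have hslope := hasDerivAt_iff_tendsto_slope.1 hderiv
    -- map θ ↦ t + θ * c into 𝓝[≠] t
    have hmap : Tendsto (fun θ : ℝ => t + θ * c) (𝓝[≠] 0) (𝓝[≠] t) := by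
      rw [tendsto_nhdsWithin_iff]
      constructor
      · have : Tendsto (fun θ : ℝ => t + θ * c) (𝓝 0) (𝓝 (t + 0 * c)) := by
          exact (tendsto_id.mul_const c).const_add t
        simpa using this.mono_left nhdsWithin_le_nhds
      · filter_upwards [self_mem_nhdsWithin] with θ (hθ : θ ≠ 0)
        simp only [mem_compl_iff, mem_singleton_iff]
        intro h
        have : θ * c = 0 := by linarith
        exact hθ ((mul_eq_zero.1 this).resolve_right hcpos.ne')
    have key : Tendsto (fun θ : ℝ => c * slope g t (t + θ * c)) (𝓝[≠] 0)
        (𝓝 (c * (α * (t - a) ^ (α - 1)))) :=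
      (hslope.comp hmap).const_mul c
    have hval : c * (α * (t - a) ^ (α - 1)) = α := by
      rw [hc, mul_left_comm, ← Real.rpow_add hta]
      norm_num
    rw [hval] at key
    refine key.congr' ?_
    have hsmall : ∀ᶠ θ : ℝ in 𝓝[≠] 0, |θ| < (t - a) / c := by
      have : ∀ᶠ θ : ℝ in 𝓝 (0:ℝ), |θ| < (t - a) / c := by
        have hp : 0 < (t - a) / c := div_pos hta hcpos
        have := Metric.ball_mem_nhds (0:ℝ) hp
        filter_upwards [this] with θ hθ
        simpa [Real.dist_eq] using hθ
      exact this.filter_mono nhdsWithin_le_nhds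
    filter_upwards [hsmall, self_mem_nhdsWithin] with θ hθ (hθ0 : θ ≠ 0)
    have harg : a < t + θ * c := by
      have : |θ * c| < t - a := by
        rw [abs_mul, abs_of_pos hcpos]
        calc |θ| * c < ((t - a) / c) * c := by
              exact mul_lt_mul_of_pos_right hθ hcpos
          _ = t - a := div_mul_cancel₀ _ hcpos.ne'
      have := neg_lt_of_abs_lt this
      linarith
    have hft : f t = g t := hf t ht
    have hfarg : f (t + θ * c) = g (t + θ * c) := hf _ harg
    rw [slope_def_field]
    rw [← hc, hft, hfarg, smul_eq_mul]
    field_simp [hft, hfarg, hθ0]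
    ring
  · intro hcont
    have h1 : Tendsto f (𝓝[>] a) (𝓝 2) := by
      rw [← hfa]
      exact (hcont.tendsto).mono_left nhdsWithin_le_nhds
    have h2 : Tendsto f (𝓝[>] a) (𝓝 0) := by
      have hg : Tendsto (fun t : ℝ => (t - a) ^ α) (𝓝 a) (𝓝 0) := by
        have hc : ContinuousAt (fun x : ℝ => x ^ α) 0 :=
          Real.continuousAt_rpow_const 0 α (Or.inr hα0.le)
        have hsub : ContinuousAt (fun t : ℝ => t - a) a := by fun_prop
        have hc' : ContinuousAt (fun x : ℝ => x ^ α) (a - a) := by simpa using hc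
        have : ContinuousAt (fun t : ℝ => (t - a) ^ α) a := ContinuousAt.comp (f := fun t => t - a) hc' hsub
        simpa [Real.zero_rpow hα0.ne'] using this.tendsto
      refine (hg.mono_left nhdsWithin_le_nhds).congr' ?_
      filter_upwards [self_mem_nhdsWithin] with x hx
      exact (hf x hx).symm
    have := tendsto_nhds_unique h1 h2
    norm_num at this
end
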